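/- arXiv:1910.06783 — 4 statements merged into one kernel-verified Lean document; each statement's English description precedes it below -/
import Mathlib

section
/- Let d ≥ 1 and k ∈ ℕ. Let p : Fin d → MvPolynomial (Fin d) ℝ each of total degree at most k, let r be homogeneous of degree k, and set q i = p i + X i * r. Let n : Fin d → ℝ and c : ℝ. Then the polynomial s = (∑ i, C (n i) * p i) + C c * r has total degree at most k, and for every point x : Fin d → ℝ lying on the hyperplane ∑ i, n i * x i = c one has eval x (∑ i, C (n i) * q i) = eval x s. (Normal-trace part of the divergence properties of RT_k: on each face of a polytope, q·n coincides with a polynomial of degree at most k.) -/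
open MvPolynomial

namespace MvPolynomial

variable {σ ι R : Type*} [CommSemiring R]

theorem totalDegree_C_mul_le (a : R) (p : MvPolynomial σ R) :
    (C a * p).totalDegree ≤ p.totalDegree := by
  rw [C_mul']
  exact totalDegree_smul_le a p

theorem totalDegree_sum_C_mul_le (s : Finset ι) (a : ι → R) (p : ι → MvPolynomial σ R) {k : ℕ}
    (hp : ∀ i ∈ s, (p i).totalDegree ≤ k) : (∑ i ∈ s, C (a i) * p i).totalDegree ≤ k :=
  (totalDegree_finsetSum _ _).trans <|
    Finset.sup_le fun i hi => (totalDegree_C_mul_le _ _).trans (hp i hi)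

theorem eval_sum_C_mul_X_mul [Fintype σ] (n : σ → R) (r : MvPolynomial σ R) (x : σ → R) :
    eval x (∑ i, C (n i) * (X i * r)) = (∑ i, n i * x i) * eval x r := by
  simp only [map_sum, map_mul, eval_C, eval_X, Finset.sum_mul, mul_assoc]

end MvPolynomial

theorem stmt_1_general (d k : ℕ)
    (p : Fin d → MvPolynomial (Fin d) ℝ) (hp : ∀ i, (p i).totalDegree ≤ k)
    (r : MvPolynomial (Fin d) ℝ) (hr : r.IsHomogeneous k)
    (q : Fin d → MvPolynomial (Fin d) ℝ) (hq : ∀ i, q i = p i + X i * r)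
    (n : Fin d → ℝ) (c : ℝ)
    (s : MvPolynomial (Fin d) ℝ) (hs : s = (∑ i, C (n i) * p i) + C c * r) :
    s.totalDegree ≤ k ∧
      ∀ x : Fin d → ℝ, (∑ i, n i * x i) = c →
        eval x (∑ i, C (n i) * q i) = eval x s := by
  subst hs
  refine ⟨(totalDegree_add _ _).trans <| max_le ?_ ?_, fun x hx => ?_⟩
  · exact totalDegree_sum_C_mul_le _ _ _ fun i _ => hp i
  · exact (totalDegree_C_mul_le _ _).trans hr.totalDegree_le
  · simp only [hq, mul_add, Finset.sum_add_distrib, map_add, eval_sum_C_mul_X_mul, hx, map_mul,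
      eval_C]

theorem stmt_1 (d k : ℕ) (hd : 1 ≤ d)
    (p : Fin d → MvPolynomial (Fin d) ℝ) (hp : ∀ i, (p i).totalDegree ≤ k)
    (r : MvPolynomial (Fin d) ℝ) (hr : r.IsHomogeneous k)
    (q : Fin d → MvPolynomial (Fin d) ℝ) (hq : ∀ i, q i = p i + X i * r)
    (n : Fin d → ℝ) (c : ℝ)
    (s : MvPolynomial (Fin d) ℝ) (hs : s = (∑ i, C (n i) * p i) + C c * r) :
    s.totalDegree ≤ k ∧
      ∀ x : Fin d → ℝ, (∑ i, n i * x i) = c →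
        eval x (∑ i, C (n i) * q i) = eval x s :=
  stmt_1_general d k p hp r hr q hq n c s hs
end

section
/- Let d ≥ 1 and k ∈ ℕ. The ℝ-subspace of (Fin d → MvPolynomial (Fin d) ℝ) consisting of all d-tuples q for which there exist p : Fin d → MvPolynomial (Fin d) ℝ, each of total degree at most k, and a homogeneous polynomial r of degree k with q i = p i + X i * r for all i, is a finite-dimensional submodule of dimension d * (k + d).choose d + (k + d - 1).choose (d - 1). (Dimension of the simplicial Raviart–Thomas space RT_k.) -/
/-!
`RT_k` is the image of `(P_k)^d × P_[k]` under `(p, r) ↦ (p i + X i * r)_i`. For `d ≥ 1` this map is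
injective: the homogeneous component of degree `k + 1` of `p i + X i * r` is `X i * r`, and `X i`
is a non-zero-divisor. So `dim RT_k = d * dim P_k + dim P_[k]`, where the monomials of degree
exactly `j` are counted by `multichoose d j` and those of degree at most `k` by the hockey-stick
identity.
-/

open MvPolynomial Finset

namespace MvPolynomial

section Dimension

variable (σ R : Type*) [CommRing R]

instance (k : ℕ) : Module.Free R (restrictTotalDegree σ R k) :=
  .of_basis (basisRestrictSupport R _)

instance (k : ℕ) : Module.Free R (homogeneousSubmodule σ R k) := by
  rw [homogeneousSubmodule_eq_finsupp_supported]
  exact .of_basis (basisRestrictSupport R _)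

instance [Finite σ] (k : ℕ) : Module.Finite R (homogeneousSubmodule σ R k) :=
  Module.Finite.iff_fg.mpr (homogeneousSubmodule_fg σ R k)

theorem finrank_restrictSupport [Nontrivial R] (s : Finset (σ →₀ ℕ)) :
    Module.finrank R (restrictSupport R (s : Set (σ →₀ ℕ))) = #s := by
  rw [Module.finrank_eq_nat_card_basis (basisRestrictSupport R _), Nat.card_coe_set_eq,
    Set.ncard_coe_finset]

variable [Fintype σ]

theorem homogeneousSubmodule_eq_restrictSupport_finsuppAntidiag [DecidableEq σ] (k : ℕ) :
    homogeneousSubmodule σ R k = restrictSupport R ↑((univ : Finset σ).finsuppAntidiag k) := by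
  rw [homogeneousSubmodule_eq_finsupp_supported]
  congr 1
  ext n
  simp [Finsupp.degree_eq_sum]

theorem restrictTotalDegree_eq_restrictSupport_biUnion [DecidableEq σ] (k : ℕ) :
    restrictTotalDegree σ R k =
      restrictSupport R ↑((range (k + 1)).biUnion ((univ : Finset σ).finsuppAntidiag ·)) := by
  unfold restrictTotalDegree
  congr 1
  ext n
  simp [Finsupp.sum_fintype]

variable [Nontrivial R]

theorem finrank_homogeneousSubmodule (k : ℕ) :
    Module.finrank R (homogeneousSubmodule σ R k) = (Fintype.card σ).multichoose k := by
  classical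
  rw [homogeneousSubmodule_eq_restrictSupport_finsuppAntidiag, finrank_restrictSupport,
    card_finsuppAntidiag_nat_eq_multichoose, card_univ]

theorem finrank_restrictTotalDegree (k : ℕ) :
    Module.finrank R (restrictTotalDegree σ R k) =
      (k + Fintype.card σ).choose (Fintype.card σ) := by
  classical
  have hdisj : ((range (k + 1) : Finset ℕ) : Set ℕ).PairwiseDisjoint
      ((univ : Finset σ).finsuppAntidiag ·) := by
    intro i _ j _ hij
    refine Finset.disjoint_left.mpr fun n hi hj => hij ?_
    rw [mem_finsuppAntidiag] at hi hj
    exact hi.1.symm.trans hj.1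
  rw [restrictTotalDegree_eq_restrictSupport_biUnion, finrank_restrictSupport, card_biUnion hdisj,
    ← Nat.sum_range_multichoose]
  simp_rw [card_finsuppAntidiag_nat_eq_multichoose, card_univ]

end Dimension

section RaviartThomas

variable (σ R : Type*) [CommRing R]

noncomputable def raviartThomasMap (k : ℕ) :
    (σ → restrictTotalDegree σ R k) × homogeneousSubmodule σ R k →ₗ[R] (σ → MvPolynomial σ R) :=
  (LinearMap.pi fun i => (restrictTotalDegree σ R k).subtype.comp (LinearMap.proj i)).coprod
    (LinearMap.pi fun i => (LinearMap.mulLeft R (X i)).comp (homogeneousSubmodule σ R k).subtype)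

noncomputable def raviartThomas (k : ℕ) : Submodule R (σ → MvPolynomial σ R) :=
  LinearMap.range (raviartThomasMap σ R k)

variable {σ R}

theorem mem_raviartThomas {k : ℕ} {q : σ → MvPolynomial σ R} :
    q ∈ raviartThomas σ R k ↔ ∃ (p : σ → MvPolynomial σ R) (r : MvPolynomial σ R),
      (∀ i, (p i).totalDegree ≤ k) ∧ r.IsHomogeneous k ∧ ∀ i, q i = p i + X i * r := by
  constructor
  · rintro ⟨⟨p, r⟩, rfl⟩
    exact ⟨fun i => p i, r, fun i => (mem_restrictTotalDegree _ _ _).mp (p i).2, r.2, fun _ => rfl⟩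
  · rintro ⟨p, r, hp, hr, hq⟩
    exact ⟨⟨fun i => ⟨p i, (mem_restrictTotalDegree _ _ _).mpr (hp i)⟩, ⟨r, hr⟩⟩,
      by funext i; exact (hq i).symm⟩

theorem eq_zero_of_add_X_mul_eq_zero {k : ℕ} {p r : MvPolynomial σ R} (i : σ)
    (hp : p.totalDegree ≤ k) (hr : r.IsHomogeneous k) (h : p + X i * r = 0) : r = 0 := by
  have hXr : homogeneousComponent (k + 1) (X i * r) = X i * r :=
    homogeneousComponent_eq_self (by simpa [add_comm] using (isHomogeneous_X R i).mul hr)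
  have hXr0 : X i * r = 0 := by
    simpa [homogeneousComponent_eq_zero (k + 1) p (by omega), hXr] using
      congrArg (homogeneousComponent (k + 1)) h
  exact isRegular_X.left (by simpa using hXr0 : X i * r = X i * 0)

theorem raviartThomasMap_injective [Nonempty σ] (k : ℕ) :
    Function.Injective (raviartThomasMap σ R k) := by
  rw [← LinearMap.ker_eq_bot, Submodule.eq_bot_iff]
  rintro ⟨p, r⟩ hpr
  have h i : (p i : MvPolynomial σ R) + X i * (r : MvPolynomial σ R) = 0 := congrFun hpr i
  have hr : (r : MvPolynomial σ R) = 0 :=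
    eq_zero_of_add_X_mul_eq_zero (Classical.arbitrary σ)
      ((mem_restrictTotalDegree _ _ _).mp (p _).2) r.2 (h _)
  ext i : 3
  · simpa [hr] using h i
  · simp [hr]

instance [Finite σ] (k : ℕ) : Module.Finite R (raviartThomas σ R k) := by
  unfold raviartThomas
  infer_instance

theorem finrank_raviartThomas [Fintype σ] [Nonempty σ] [Nontrivial R] (k : ℕ) :
    Module.finrank R (raviartThomas σ R k) =
      Fintype.card σ * (k + Fintype.card σ).choose (Fintype.card σ) +
        (Fintype.card σ).multichoose k := by
  rw [raviartThomas, LinearMap.finrank_range_of_inj (raviartThomasMap_injective k),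
    Module.finrank_prod, Module.finrank_pi_fintype, finrank_restrictTotalDegree,
    finrank_homogeneousSubmodule, sum_const, card_univ, smul_eq_mul]

end RaviartThomas

end MvPolynomial

theorem stmt_3 (d k : ℕ) (hd : 1 ≤ d)
    (RT : Submodule ℝ (Fin d → MvPolynomial (Fin d) ℝ))
    (hRT : (RT : Set (Fin d → MvPolynomial (Fin d) ℝ)) =
      {q | ∃ (p : Fin d → MvPolynomial (Fin d) ℝ) (r : MvPolynomial (Fin d) ℝ),
        (∀ i, (p i).totalDegree ≤ k) ∧ r.IsHomogeneous k ∧ ∀ i, q i = p i + X i * r}) :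
    FiniteDimensional ℝ RT ∧
      Module.finrank ℝ RT = d * (k + d).choose d + (k + d - 1).choose (d - 1) := by
  obtain rfl : RT = raviartThomas (Fin d) ℝ k :=
    SetLike.coe_injective (hRT.trans (Set.ext fun _ => mem_raviartThomas.symm))
  have : Nonempty (Fin d) := ⟨⟨0, hd⟩⟩
  refine ⟨inferInstance, ?_⟩
  rw [finrank_raviartThomas, Fintype.card_fin, Nat.multichoose_eq,
    Nat.choose_symm_of_eq_add (by omega : d + k - 1 = k + (d - 1)), add_comm d k]
end

section
/- Let d ≥ 1 and l₁, l₂ ∈ ℕ. Let p : Fin d → MvPolynomial (Fin d) ℝ with degreeOf j (p i) ≤ l₁ for all i, j, let r ∈ MvPolynomial (Fin d) ℝ with degreeOf j r ≤ l₂ for all j, and set q i = p i + X i * r. Let n : Fin d → ℝ and c : ℝ. Then the polynomial s = (∑ i, C (n i) * p i) + C c * r satisfies degreeOf j s ≤ max l₁ l₂ for every j, and for every point x : Fin d → ℝ with ∑ i, n i * x i = c one has eval x (∑ i, C (n i) * q i) = eval x s. (Polynomial core of Proposition 1: for q in the space H_k(K) = (A_k)^d + x·B_k, the restriction of the normal component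 q·n to a face with constant normal n and offset c lies in Q_{max{l₁,l₂}}.) -/
open MvPolynomial

namespace MvPolynomial

variable {R σ ι : Type*} [CommSemiring R]

theorem degreeOf_sum_C_mul_le (j : σ) (s : Finset ι) (a : ι → R) (p : ι → MvPolynomial σ R)
    {l : ℕ} (hp : ∀ i ∈ s, degreeOf j (p i) ≤ l) :
    degreeOf j (∑ i ∈ s, C (a i) * p i) ≤ l :=
  (degreeOf_sum_le _ _ _).trans <|
    Finset.sup_le fun i hi => (degreeOf_C_mul_le _ _ _).trans (hp i hi)

theorem degreeOf_sum_C_mul_add_C_mul_le (j : σ) (s : Finset ι) (a : ι → R) (b : R)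
    (p : ι → MvPolynomial σ R) (r : MvPolynomial σ R) {l₁ l₂ : ℕ}
    (hp : ∀ i ∈ s, degreeOf j (p i) ≤ l₁) (hr : degreeOf j r ≤ l₂) :
    degreeOf j (∑ i ∈ s, C (a i) * p i + C b * r) ≤ max l₁ l₂ :=
  (degreeOf_add_le _ _ _).trans <|
    max_le_max (degreeOf_sum_C_mul_le j s a p hp) ((degreeOf_C_mul_le _ _ _).trans hr)

theorem eval_sum_C_mul_add_X_mul (s : Finset σ) (x : σ → R) (n : σ → R)
    (p : σ → MvPolynomial σ R) (r : MvPolynomial σ R) :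
    eval x (∑ i ∈ s, C (n i) * (p i + X i * r)) =
      eval x (∑ i ∈ s, C (n i) * p i) + (∑ i ∈ s, n i * x i) * eval x r := by
  simp only [map_sum, map_mul, map_add, eval_C, eval_X, Finset.sum_mul, ← Finset.sum_add_distrib]
  exact Finset.sum_congr rfl fun i _ => by ring

end MvPolynomial

theorem stmt_8_general (d : ℕ) (l₁ l₂ : ℕ)
    (p : Fin d → MvPolynomial (Fin d) ℝ) (hp : ∀ i j, degreeOf j (p i) ≤ l₁)
    (r : MvPolynomial (Fin d) ℝ) (hr : ∀ j, degreeOf j r ≤ l₂)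
    (q : Fin d → MvPolynomial (Fin d) ℝ) (hq : ∀ i, q i = p i + X i * r)
    (n : Fin d → ℝ) (c : ℝ)
    (s : MvPolynomial (Fin d) ℝ) (hs : s = (∑ i, C (n i) * p i) + C c * r) :
    (∀ j, degreeOf j s ≤ max l₁ l₂) ∧
      ∀ x : Fin d → ℝ, (∑ i, n i * x i) = c →
        eval x (∑ i, C (n i) * q i) = eval x s := by
  subst hs
  refine ⟨fun j => degreeOf_sum_C_mul_add_C_mul_le j _ n c p r (fun i _ => hp i j) (hr j),
    fun x hx => ?_⟩
  rw [funext hq, eval_sum_C_mul_add_X_mul, hx, map_add, map_mul, eval_C]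

theorem stmt_8 (d : ℕ) (hd : 1 ≤ d) (l₁ l₂ : ℕ)
    (p : Fin d → MvPolynomial (Fin d) ℝ) (hp : ∀ i j, degreeOf j (p i) ≤ l₁)
    (r : MvPolynomial (Fin d) ℝ) (hr : ∀ j, degreeOf j r ≤ l₂)
    (q : Fin d → MvPolynomial (Fin d) ℝ) (hq : ∀ i, q i = p i + X i * r)
    (n : Fin d → ℝ) (c : ℝ)
    (s : MvPolynomial (Fin d) ℝ) (hs : s = (∑ i, C (n i) * p i) + C c * r) :
    (∀ j, degreeOf j s ≤ max l₁ l₂) ∧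
      ∀ x : Fin d → ℝ, (∑ i, n i * x i) = c →
        eval x (∑ i, C (n i) * q i) = eval x s :=
  stmt_8_general d l₁ l₂ p hp r hr q hq n c s hs
end

section
/- Let d ≥ 1 and k ∈ ℕ. The ℝ-subspace of (Fin d → MvPolynomial (Fin d) ℝ) consisting of all d-tuples q such that for each i, degreeOf i (q i) ≤ k + 1 and degreeOf j (q i) ≤ k for every j ≠ i, is finite dimensional of dimension d * (k + 2) * (k + 1)^(d − 1). (Dimension of the Raviart–Thomas space RT_k = ×_{i=1}^{d} P_{ζ_i(k+1, k, …, k)} on quadrangles/hexahedra.) -/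
/-!
The `i`-th component of a tuple in `RT_k` ranges, independently of the others, over the
polynomials of degree at most `k + 1` in `X i` and at most `k` in every other variable. That space
has the monomial basis indexed by the box `∏ⱼ [0, nⱼ]` of exponents, of size
`(k + 2) (k + 1) ^ (d - 1)`, and the `d` components contribute this dimension each.
-/

open MvPolynomial

noncomputable section

namespace Finsupp

theorem natCard_subtype_coe_le {σ : Type*} [Fintype σ] (n : σ → ℕ) :
    Nat.card {m : σ →₀ ℕ // ⇑m ≤ n} = ∏ j, (n j + 1) := by
  classical
  calc Nat.card {m : σ →₀ ℕ // ⇑m ≤ n}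
      = Nat.card (Set.Iic n) := Nat.card_congr (equivFunOnFinite.subtypeEquiv fun _ => .rfl)
    _ = ∏ j, (n j + 1) := by simp [Pi.card_Iic]

end Finsupp

namespace MvPolynomial

variable {σ R : Type*} [CommRing R]

variable (R) in
def restrictDegreeOf (n : σ → ℕ) : Submodule R (MvPolynomial σ R) :=
  restrictSupport R {m | ⇑m ≤ n}

theorem mem_restrictDegreeOf_iff {n : σ → ℕ} {p : MvPolynomial σ R} :
    p ∈ restrictDegreeOf R n ↔ ∀ j, degreeOf j p ≤ n j := by
  simp only [restrictDegreeOf, mem_restrictSupport_iff, degreeOf_le_iff, Set.subset_def,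
    Finset.mem_coe, Set.mem_ofPred_eq, Pi.le_def]
  exact ⟨fun h j m hm => h m hm j, fun h m hm j => h j m hm⟩

variable [Fintype σ] (n : σ → ℕ)

def basisRestrictDegreeOf : Module.Basis {m : σ →₀ ℕ // ⇑m ≤ n} R (restrictDegreeOf R n) :=
  basisRestrictSupport R _

instance : Module.Free R (restrictDegreeOf R n) := .of_basis (basisRestrictDegreeOf n)

instance : Module.Finite R (restrictDegreeOf R n) := by
  have : Finite {m : σ →₀ ℕ // ⇑m ≤ n} :=
    Nat.finite_of_card_ne_zero (by simp [Finsupp.natCard_subtype_coe_le, Finset.prod_ne_zero_iff])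
  exact .of_basis (basisRestrictDegreeOf n)

theorem finrank_restrictDegreeOf [Nontrivial R] :
    Module.finrank R (restrictDegreeOf R n) = ∏ j, (n j + 1) := by
  rw [Module.finrank_eq_nat_card_basis (basisRestrictDegreeOf n), Finsupp.natCard_subtype_coe_le]

end MvPolynomial

namespace Submodule

variable {ι R : Type*} {M : ι → Type*} [∀ i, AddCommMonoid (M i)]

def piUnivEquiv [Semiring R] [∀ i, Module R (M i)] (p : ∀ i, Submodule R (M i)) :
    pi Set.univ p ≃ₗ[R] ∀ i, p i where
  toFun x i := ⟨x.1 i, x.2 i (Set.mem_univ i)⟩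
  invFun y := ⟨fun i => y i, fun i _ => (y i).2⟩
  map_add' _ _ := rfl
  map_smul' _ _ := rfl

variable [Fintype ι] [Ring R] [StrongRankCondition R] [∀ i, Module R (M i)]
  (p : ∀ i, Submodule R (M i)) [∀ i, Module.Free R (p i)] [∀ i, Module.Finite R (p i)]

instance : Module.Finite R (pi Set.univ p) := .equiv (piUnivEquiv p).symm

theorem finrank_pi_univ : Module.finrank R (pi Set.univ p) = ∑ i, Module.finrank R (p i) := by
  rw [(piUnivEquiv p).finrank_eq, Module.finrank_pi_fintype]

end Submodule

end

theorem prod_update_const_add_one {ι : Type*} [Fintype ι] [DecidableEq ι] (i : ι) (k : ℕ) :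
    ∏ j, (Function.update (fun _ => k) i (k + 1) j + 1) =
      (k + 2) * (k + 1) ^ (Fintype.card ι - 1) := by
  simp_rw [Function.apply_update (fun _ n => n + 1)]
  rw [Finset.prod_update_of_mem (Finset.mem_univ i), Finset.prod_const, Finset.card_sdiff]
  simp

theorem stmt_12_general (d k : ℕ)
    (RT : Submodule ℝ (Fin d → MvPolynomial (Fin d) ℝ))
    (hRT : (RT : Set (Fin d → MvPolynomial (Fin d) ℝ)) =
      {q | ∀ i, degreeOf i (q i) ≤ k + 1 ∧ ∀ j ≠ i, degreeOf j (q i) ≤ k}) :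
    FiniteDimensional ℝ RT ∧
      Module.finrank ℝ RT = d * (k + 2) * (k + 1) ^ (d - 1) := by
  have hRT_pi : RT = Submodule.pi Set.univ
      fun i => restrictDegreeOf ℝ (Function.update (fun _ => k) i (k + 1)) := by
    refine SetLike.coe_injective (hRT.trans ?_)
    ext q
    simp only [Set.mem_ofPred_eq, SetLike.mem_coe, Submodule.mem_pi, Set.mem_univ, true_imp_iff,
      mem_restrictDegreeOf_iff]
    exact forall_congr' fun i =>
      (Function.forall_update_iff (fun _ => k) fun j n => degreeOf j (q i) ≤ n).symm
  subst hRT_pi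
  refine ⟨inferInstance, ?_⟩
  simp [Submodule.finrank_pi_univ, finrank_restrictDegreeOf, prod_update_const_add_one, mul_assoc]

theorem stmt_12 (d k : ℕ) (hd : 1 ≤ d)
    (RT : Submodule ℝ (Fin d → MvPolynomial (Fin d) ℝ))
    (hRT : (RT : Set (Fin d → MvPolynomial (Fin d) ℝ)) =
      {q | ∀ i, degreeOf i (q i) ≤ k + 1 ∧ ∀ j ≠ i, degreeOf j (q i) ≤ k}) :
    FiniteDimensional ℝ RT ∧
      Module.finrank ℝ RT = d * (k + 2) * (k + 1) ^ (d - 1) :=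
  stmt_12_general d k RT hRT
end
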